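/- For every integer e ≥ 4, the largest real root ψ_e of the polynomial Ψ_e satisfies ψ_e > k_e + 1. -/

import Mathlib

open Polynomial Matrix

attribute [local instance] Classical.propDecidable

/-- The spectral radius of a finite simple graph: the largest modulus of a (real)
eigenvalue of its adjacency matrix. -/
noncomputable def specRad {V : Type} [Fintype V] (G : SimpleGraph V) : ℝ :=
  sSup { r : ℝ | ∃ μ : ℝ, (∃ v : V → ℝ, v ≠ 0 ∧ (G.adjMatrix ℝ) *ᵥ v = μ • v) ∧ r = |μ| }

/-- The characteristic polynomial of the adjacency matrix of a graph. -/
noncomputable def gCharPoly {V : Type} [Fintype V] (G : SimpleGraph V) : Polynomial ℝ :=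
  Matrix.charpoly (G.adjMatrix ℝ)

/-- `G` is a connected graph with `n` vertices and `n - 1 + e` edges. -/
def memC (n e : ℕ) (G : SimpleGraph (Fin n)) : Prop :=
  G.Connected ∧ G.edgeSet.ncard = n - 1 + e

/-- `kk e` is the largest natural number `k` with `k * (k - 1) / 2 ≤ e`. -/
def kk (e : ℕ) : ℕ := Nat.findGreatest (fun k => k * (k - 1) ≤ 2 * e) (e + 2)

def tt (e : ℕ) : ℕ := e - kk e * (kk e - 1) / 2

def bb (e : ℕ) : ℕ := if e = 0 then 1 else if tt e = 0 then kk e + 1 else kk e + 2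

/-- The graph `V_{n,e} = (K_{1,e} + (n-e-2)K_1) ∨ K_1` (vertices `0`-based: paper vertex `i`
is `i - 1` here): vertex `0` is adjacent to all other vertices, vertex `1` is additionally
adjacent to vertices `2, …, e+1`, and there are no other edges. -/
def graphV (n e : ℕ) : SimpleGraph (Fin n) :=
  SimpleGraph.fromRel (fun i j => (i : ℕ) = 0 ∨ ((i : ℕ) = 1 ∧ 2 ≤ (j : ℕ) ∧ (j : ℕ) ≤ e + 1))

/-- The graph `D_{n,e}` (vertices `0`-based): vertex `0` is adjacent to all other vertices,
and for `1 ≤ i < j`, vertices `i` and `j` are adjacent iff `j ≤ kk e` or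
(`j = kk e + 1` and `i ≤ tt e`).  For `n < kk e + 2` this is the complete graph. -/
def graphD (n e : ℕ) : SimpleGraph (Fin n) :=
  SimpleGraph.fromRel (fun i j =>
    (i : ℕ) = 0 ∨ (1 ≤ (i : ℕ) ∧ (i : ℕ) < (j : ℕ) ∧
      ((j : ℕ) ≤ kk e ∨ ((j : ℕ) = kk e + 1 ∧ (i : ℕ) ≤ tt e))))

/-- A graph on `Fin n` whose adjacency matrix is stepwise (i.e. a threshold graph whose
vertices are already arranged in the canonical order). -/
def IsStepwise {n : ℕ} (G : SimpleGraph (Fin n)) : Prop :=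
  ∀ i j k l : Fin n, G.Adj i j → i < j → k < l → k ≤ i → l ≤ j → G.Adj k l

/-- The (0-based) index of the last vertex of degree at least 2, i.e. the paper's `s - 1`. -/
noncomputable def sIdx {n : ℕ} (G : SimpleGraph (Fin n)) : ℕ :=
  Nat.findGreatest (fun i => ∃ h : i < n, 2 ≤ (G.neighborSet ⟨i, h⟩).ncard) (n - 1)

/-- The T-subgraph `T(G)`: the subgraph of `G` induced on vertices `1, …, sIdx G`
(paper vertices `2, …, s`). -/
noncomputable def Tgraph {n : ℕ} (G : SimpleGraph (Fin n)) : SimpleGraph (Fin (sIdx G)) :=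
  SimpleGraph.comap (fun i => (⟨(i : ℕ) + 1, by
    have h1 : (i : ℕ) < sIdx G := i.isLt
    have h2 : sIdx G ≤ n - 1 := by unfold sIdx; exact Nat.findGreatest_le _
    omega⟩ : Fin n)) G

/-- The graph `T1(G) = T(G) ∨ K_1`: the subgraph of `G` induced on vertices
`0, 1, …, sIdx G` (paper vertices `1, …, s`). -/
noncomputable def T1graph {n : ℕ} (G : SimpleGraph (Fin n)) : SimpleGraph (Fin (sIdx G + 1)) :=
  if h : 0 < n then
    SimpleGraph.comap (fun i => (⟨(i : ℕ) % n, Nat.mod_lt _ h⟩ : Fin n)) G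
  else ⊥

/-- The rational function `R_G(λ) = λ · P_{T1(G)}(λ) / P_{T(G)}(λ)`. -/
noncomputable def Rfun {n : ℕ} (G : SimpleGraph (Fin n)) : ℝ → ℝ :=
  fun x => x * (gCharPoly (T1graph G)).eval x / (gCharPoly (Tgraph G)).eval x

/-- The polynomial `Q_{G1,G2}`. -/
noncomputable def Qpoly {n : ℕ} (G1 G2 : SimpleGraph (Fin n)) : Polynomial ℝ :=
  X * (gCharPoly (T1graph G1) * gCharPoly (Tgraph G2)
       - gCharPoly (T1graph G2) * gCharPoly (Tgraph G1))
  + C ((sIdx G1 : ℝ) - (sIdx G2 : ℝ)) * (gCharPoly (Tgraph G1) * gCharPoly (Tgraph G2))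

/-- `r` is the largest real root of the polynomial `P`. -/
def IsGreatestRoot (P : Polynomial ℝ) (r : ℝ) : Prop :=
  P.eval r = 0 ∧ ∀ x : ℝ, P.eval x = 0 → x ≤ r

/-- `r` is the largest real zero of the function `f`. -/
def IsGreatestZero (f : ℝ → ℝ) (r : ℝ) : Prop :=
  f r = 0 ∧ ∀ x : ℝ, f x = 0 → x ≤ r

/-- Disjoint union of two simple graphs. -/
def gSum {α β : Type} (G : SimpleGraph α) (H : SimpleGraph β) : SimpleGraph (α ⊕ β) where
  Adj x y := (∃ a b, x = Sum.inl a ∧ y = Sum.inl b ∧ G.Adj a b) ∨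
             (∃ a b, x = Sum.inr a ∧ y = Sum.inr b ∧ H.Adj a b)
  symm := by
    constructor
    rintro x y (⟨a, b, rfl, rfl, hab⟩ | ⟨a, b, rfl, rfl, hab⟩)
    · exact Or.inl ⟨b, a, rfl, rfl, hab.symm⟩
    · exact Or.inr ⟨b, a, rfl, rfl, hab.symm⟩
  loopless := by
    constructor
    rintro x (⟨a, b, rfl, hx, hab⟩ | ⟨a, b, rfl, hx, hab⟩)
    · obtain rfl := Sum.inl.inj hx; exact G.irrefl hab
    · obtain rfl := Sum.inr.inj hx; exact H.irrefl hab

/-- Join of two simple graphs: all cross edges are present. -/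
def gJoin {α β : Type} (G : SimpleGraph α) (H : SimpleGraph β) : SimpleGraph (α ⊕ β) :=
  (gSum Gᶜ Hᶜ)ᶜ

/-- The polynomial `Ψ_e`. -/
noncomputable def PsiPoly (e : ℕ) : Polynomial ℝ :=
  let k : ℝ := kk e
  let t : ℝ := tt e
  C ((k - 1) * (k - 2) * (k ^ 2 - 3 * k + 4 * t)) * X ^ 3
  - C (k ^ 5 - 6 * k ^ 4 + k ^ 3 * (4 * t + 15) - k ^ 2 * (20 * t + 18)
        + k * (8 * t ^ 2 + 24 * t + 8) - (4 * t ^ 2 + 12 * t)) * X ^ 2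
  - C ((k ^ 2 - k + 2 * t) * (k ^ 3 + k ^ 2 * (t - 4) - k * (3 * t - 5)
        + (4 * t ^ 2 - 2 * t - 2))) * X
  + C (t * (k - t - 1) * (k ^ 2 - 3 * k + 2 * t) * (k ^ 2 - k + 2 * t))


open Polynomial Filter

/-!
Write `k = kk e` and `t = tt e`, so that `0 ≤ t < k` and `k (k - 1) + 2 t = 2 e ≥ 8`. Then the
leading coefficient `(k - 1)(k - 2)(k² - 3k + 4t)` of `Ψ_e` is positive, and `Ψ_e(k + 1)`, viewed
as a polynomial in real `k ≥ 3` and `0 ≤ t ≤ k - 1`, is negative. The intermediate value theorem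
gives a root of `Ψ_e` beyond `k + 1`.
-/
theorem IsGreatestRoot.lt_of_eval_neg {P : ℝ[X]} {r a : ℝ} (hr : IsGreatestRoot P r)
    (hdeg : 0 < P.degree) (hlc : 0 < P.leadingCoeff) (ha : P.eval a < 0) : a < r := by
  obtain ⟨b, hb_nonneg, hab⟩ :=
    ((P.tendsto_atTop_of_leadingCoeff_nonneg hdeg hlc.le).eventually_ge_atTop 0).and
      (eventually_ge_atTop a) |>.exists
  obtain ⟨y, hy, hPy⟩ := intermediate_value_Icc hab P.continuous.continuousOn
    ⟨ha.le, hb_nonneg⟩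
  have hay : a ≠ y := by rintro rfl; exact ha.ne hPy
  exact (lt_of_le_of_ne hy.1 hay).trans_le (hr.2 y hPy)

theorem kk_mul_pred_le (e : ℕ) : kk e * (kk e - 1) ≤ 2 * e :=
  Nat.findGreatest_spec (P := fun k => k * (k - 1) ≤ 2 * e) (m := 0) (Nat.zero_le _) (by simp)

theorem three_le_kk {e : ℕ} (he : 3 ≤ e) : 3 ≤ kk e :=
  Nat.le_findGreatest (by omega) (by omega)

theorem two_mul_lt_kk_succ_mul (e : ℕ) : 2 * e < (kk e + 1) * kk e := by
  have hle : kk e + 1 ≤ e + 2 := by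
    refine Nat.succ_le_of_lt (lt_of_le_of_ne (Nat.findGreatest_le _) fun h => ?_)
    have := kk_mul_pred_le e
    rw [h, show e + 2 - 1 = e + 1 by omega] at this
    nlinarith
  simpa using Nat.findGreatest_is_greatest (P := fun k => k * (k - 1) ≤ 2 * e)
    (Nat.lt_succ_self (kk e)) hle

theorem kk_mul_self_add_two_mul_tt (e : ℕ) : kk e * kk e + 2 * tt e = 2 * e + kk e := by
  have hle := kk_mul_pred_le e
  have heven : 2 ∣ kk e * (kk e - 1) := (Nat.even_mul_pred_self (kk e)).two_dvd
  have hsq : kk e * kk e = kk e * (kk e - 1) + kk e := by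
    rcases Nat.eq_zero_or_pos (kk e) with h | h
    · simp [h]
    · rw [Nat.mul_sub_one, Nat.sub_add_cancel (Nat.le_mul_self _)]
  unfold tt
  omega

theorem tt_lt_kk (e : ℕ) : tt e < kk e := by
  have h1 := kk_mul_self_add_two_mul_tt e
  have h2 := two_mul_lt_kk_succ_mul e
  nlinarith

noncomputable def psiCubic (k t : ℝ) : Cubic ℝ where
  a := (k - 1) * (k - 2) * (k ^ 2 - 3 * k + 4 * t)
  b := -(k ^ 5 - 6 * k ^ 4 + k ^ 3 * (4 * t + 15) - k ^ 2 * (20 * t + 18)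
        + k * (8 * t ^ 2 + 24 * t + 8) - (4 * t ^ 2 + 12 * t))
  c := -((k ^ 2 - k + 2 * t) * (k ^ 3 + k ^ 2 * (t - 4) - k * (3 * t - 5)
        + (4 * t ^ 2 - 2 * t - 2)))
  d := t * (k - t - 1) * (k ^ 2 - 3 * k + 2 * t) * (k ^ 2 - k + 2 * t)

theorem PsiPoly_eq_toPoly_psiCubic (e : ℕ) : PsiPoly e = (psiCubic (kk e) (tt e)).toPoly := by
  simp only [PsiPoly, psiCubic, Cubic.toPoly, C_neg]
  ring

theorem psiCubic_a_pos {k t : ℝ} (hk : 3 ≤ k) (ht : 0 ≤ t) (hkt : 8 + k ≤ k * k + 2 * t) :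
    0 < (psiCubic k t).a := by
  have h : 0 < k ^ 2 - 3 * k + 4 * t := by nlinarith
  simp only [psiCubic]
  have : 0 < (k - 1) * (k - 2) := by nlinarith
  positivity

theorem psiCubic_eval_succ_neg {k t : ℝ} (hk : 3 ≤ k) (ht : 0 ≤ t) (htk : t + 1 ≤ k) :
    (psiCubic k t).toPoly.eval (k + 1) < 0 := by
  simp only [psiCubic, Cubic.toPoly, eval_add, eval_mul, eval_C, eval_pow, eval_X]
  nlinarith [mul_nonneg ht ht, sq_nonneg (k - 3), mul_nonneg (mul_nonneg ht ht) ht,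
    mul_nonneg ht (sub_nonneg.2 htk), sq_nonneg (k - t - 1),
    mul_nonneg (sub_nonneg.2 hk) ht, mul_nonneg (sub_nonneg.2 hk) (sub_nonneg.2 hk),
    sq_nonneg (k * t - 4 * t), sq_nonneg (k ^ 2 - 3 * k),
    mul_pos (by linarith : (0:ℝ) < k) (by linarith : (0:ℝ) < k)]

theorem stmt_14 (e : ℕ) (he : 4 ≤ e) (ψ : ℝ) (hψ : IsGreatestRoot (PsiPoly e) ψ) :
    (kk e : ℝ) + 1 < ψ := by
  have hk : (3 : ℝ) ≤ kk e := by exact_mod_cast three_le_kk (by omega)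
  have htk : (tt e : ℝ) + 1 ≤ kk e := by exact_mod_cast tt_lt_kk e
  have hkt : 8 + (kk e : ℝ) ≤ kk e * kk e + 2 * tt e := by
    have := kk_mul_self_add_two_mul_tt e
    exact_mod_cast (by omega : 8 + kk e ≤ kk e * kk e + 2 * tt e)
  have ha := psiCubic_a_pos hk (Nat.cast_nonneg _) hkt
  rw [PsiPoly_eq_toPoly_psiCubic] at hψ
  refine hψ.lt_of_eval_neg ?_ ?_ (psiCubic_eval_succ_neg hk (Nat.cast_nonneg _) htk)
  · rw [Cubic.degree_of_a_ne_zero ha.ne']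
    norm_num
  · rwa [Cubic.leadingCoeff_of_a_ne_zero ha.ne']
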